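/- For every n ≥ 4, the graph K_n^+ satisfies σ⊠_E(K_n^+) > max{σ×_E(K_n^+), σ□_E(K_n^+)}. -/

import Mathlib

open SimpleGraph

/-- An `l`-track on `G`: a surjective function whose consecutive values are adjacent. -/
def IsTrack {V : Type*} (G : SimpleGraph V) {l : ℕ} (f : Fin l → V) : Prop :=
  Function.Surjective f ∧
    ∀ i : ℕ, ∀ hi : i + 1 < l, G.Adj (f ⟨i, Nat.lt_of_succ_lt hi⟩) (f ⟨i + 1, hi⟩)

/-- A lazy `l`-track on `G`: consecutive values are adjacent or equal. -/
def IsLazyTrack {V : Type*} (G : SimpleGraph V) {l : ℕ} (f : Fin l → V) : Prop :=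
  Function.Surjective f ∧
    ∀ i : ℕ, ∀ hi : i + 1 < l,
      G.Adj (f ⟨i, Nat.lt_of_succ_lt hi⟩) (f ⟨i + 1, hi⟩) ∨
        f ⟨i, Nat.lt_of_succ_lt hi⟩ = f ⟨i + 1, hi⟩

/-- The condition that every edge of `G` is traversed by `f`. -/
def SweepCond {V : Type*} (G : SimpleGraph V) {l : ℕ} (f : Fin l → V) : Prop :=
  ∀ e ∈ G.edgeSet, ∃ i : ℕ, ∃ hi : i + 1 < l,
    e = s(f ⟨i, Nat.lt_of_succ_lt hi⟩, f ⟨i + 1, hi⟩)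

/-- An `l`-sweep on `G`: an `l`-track traversing every edge. -/
def IsSweep {V : Type*} (G : SimpleGraph V) {l : ℕ} (f : Fin l → V) : Prop :=
  IsTrack G f ∧ SweepCond G f

/-- A lazy `l`-sweep on `G`: a lazy `l`-track traversing every edge. -/
def IsLazySweep {V : Type*} (G : SimpleGraph V) {l : ℕ} (f : Fin l → V) : Prop :=
  IsLazyTrack G f ∧ SweepCond G f

/-- `f` and `g` are opposite: at each step exactly `f` moves iff `g` stays. -/
def IsOpposite {V : Type*} (G : SimpleGraph V) {l : ℕ} (f g : Fin l → V) : Prop :=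
  ∀ i : ℕ, ∀ hi : i + 1 < l,
    (G.Adj (f ⟨i, Nat.lt_of_succ_lt hi⟩) (f ⟨i + 1, hi⟩) ↔
      g ⟨i, Nat.lt_of_succ_lt hi⟩ = g ⟨i + 1, hi⟩)

/-- The distance `m_G(f,g)`: minimal distance between simultaneous positions. -/
noncomputable def mDist {V : Type*} (G : SimpleGraph V) {l : ℕ} (f g : Fin l → V) : ℕ :=
  sInf {d | ∃ i : Fin l, G.dist (f i) (g i) = d}

/-- Strong vertex span `σ⊠_V(G)`. -/
noncomputable def strongVertexSpan {V : Type*} (G : SimpleGraph V) : ℕ :=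
  sSup {d | ∃ (l : ℕ) (f g : Fin l → V), IsLazyTrack G f ∧ IsLazyTrack G g ∧ mDist G f g = d}

/-- Direct vertex span `σ×_V(G)`. -/
noncomputable def directVertexSpan {V : Type*} (G : SimpleGraph V) : ℕ :=
  sSup {d | ∃ (l : ℕ) (f g : Fin l → V), IsTrack G f ∧ IsTrack G g ∧ mDist G f g = d}

/-- Cartesian vertex span `σ□_V(G)`. -/
noncomputable def cartesianVertexSpan {V : Type*} (G : SimpleGraph V) : ℕ :=
  sSup {d | ∃ (l : ℕ) (f g : Fin l → V),
    IsLazyTrack G f ∧ IsLazyTrack G g ∧ IsOpposite G f g ∧ mDist G f g = d}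

/-- Strong edge span `σ⊠_E(G)`. -/
noncomputable def strongEdgeSpan {V : Type*} (G : SimpleGraph V) : ℕ :=
  sSup {d | ∃ (l : ℕ) (f g : Fin l → V), IsLazySweep G f ∧ IsLazySweep G g ∧ mDist G f g = d}

/-- Direct edge span `σ×_E(G)`. -/
noncomputable def directEdgeSpan {V : Type*} (G : SimpleGraph V) : ℕ :=
  sSup {d | ∃ (l : ℕ) (f g : Fin l → V), IsSweep G f ∧ IsSweep G g ∧ mDist G f g = d}

/-- Cartesian edge span `σ□_E(G)`. -/
noncomputable def cartesianEdgeSpan {V : Type*} (G : SimpleGraph V) : ℕ :=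
  sSup {d | ∃ (l : ℕ) (f g : Fin l → V),
    IsLazySweep G f ∧ IsLazySweep G g ∧ IsOpposite G f g ∧ mDist G f g = d}

/-- `L⊠_V(G)`: minimal length of lazy tracks realizing the strong vertex span. -/
noncomputable def strongVertexL {V : Type*} (G : SimpleGraph V) : ℕ :=
  sInf {l | ∃ f g : Fin l → V,
    IsLazyTrack G f ∧ IsLazyTrack G g ∧ mDist G f g = strongVertexSpan G}

/-- `L×_V(G)`. -/
noncomputable def directVertexL {V : Type*} (G : SimpleGraph V) : ℕ :=
  sInf {l | ∃ f g : Fin l → V,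
    IsTrack G f ∧ IsTrack G g ∧ mDist G f g = directVertexSpan G}

/-- `L□_V(G)`. -/
noncomputable def cartesianVertexL {V : Type*} (G : SimpleGraph V) : ℕ :=
  sInf {l | ∃ f g : Fin l → V,
    IsLazyTrack G f ∧ IsLazyTrack G g ∧ IsOpposite G f g ∧ mDist G f g = cartesianVertexSpan G}

/-- `L⊠_E(G)`. -/
noncomputable def strongEdgeL {V : Type*} (G : SimpleGraph V) : ℕ :=
  sInf {l | ∃ f g : Fin l → V,
    IsLazySweep G f ∧ IsLazySweep G g ∧ mDist G f g = strongEdgeSpan G}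

/-- `L×_E(G)`. -/
noncomputable def directEdgeL {V : Type*} (G : SimpleGraph V) : ℕ :=
  sInf {l | ∃ f g : Fin l → V,
    IsSweep G f ∧ IsSweep G g ∧ mDist G f g = directEdgeSpan G}

/-- `L□_E(G)`. -/
noncomputable def cartesianEdgeL {V : Type*} (G : SimpleGraph V) : ℕ :=
  sInf {l | ∃ f g : Fin l → V,
    IsLazySweep G f ∧ IsLazySweep G g ∧ IsOpposite G f g ∧ mDist G f g = cartesianEdgeSpan G}

/-- `K_n^+`: the complete graph `K_n` (on `Fin n`, with `v_1 = 0` and `v_n = n-1`)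
with the edge `v_1 v_n` subdivided through the new vertex `w = Sum.inr ()`. -/
def KnPlus (n : ℕ) : SimpleGraph (Fin n ⊕ Unit) :=
  SimpleGraph.fromRel (fun a b =>
    match a, b with
    | Sum.inl i, Sum.inl j =>
        ¬((i.val = 0 ∧ j.val = n - 1) ∨ (i.val = n - 1 ∧ j.val = 0))
    | Sum.inl i, Sum.inr _ => i.val = 0 ∨ i.val = n - 1
    | Sum.inr _, _ => False)

/-!
Let `φ` send `v_1 ↦ v_n`, `v_n ↦ v_1`, every inner vertex `v_i` to `w`, and `w ↦ v_2`. Each vertex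
is at distance two from its image, and edges go to edges or loops, so `x ↦ (x, φ x)` and
`x ↦ (φ x, x)` embed `K_n^+` into the graph of pairs at distance two, adjacent in `K_n^+ ⊠ K_n^+`. Both copies lie
in one component (they share `(v_1, v_n)`), so one walk there traverses the images of all edges;
its two coordinates are lazy sweeps at distance two, and `σ⊠_E ≥ 2`.

Conversely, `w` is the only vertex at distance two from an inner vertex, so while one sweep
crosses an edge `v_2 v_3` the other stays at `w` and is not a sweep: `σ×_E ≤ 1`. No vertex is at
distance two from both `v_1` and `w`, so while one sweep crosses `v_1 w` the other must move, which
opposite sweeps forbid: `σ□_E ≤ 1`.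
-/

namespace SimpleGraph

variable {V W : Type*}

def strongProd (G : SimpleGraph V) (H : SimpleGraph W) : SimpleGraph (V × W) where
  Adj x y := x ≠ y ∧ (G.Adj x.1 y.1 ∨ x.1 = y.1) ∧ (H.Adj x.2 y.2 ∨ x.2 = y.2)
  symm := ⟨fun _ _ h => ⟨h.1.symm, h.2.1.imp G.adj_symm Eq.symm, h.2.2.imp H.adj_symm Eq.symm⟩⟩
  loopless := ⟨fun _ h => h.1 rfl⟩

lemma strongProd_adj {G : SimpleGraph V} {H : SimpleGraph W} {x y : V × W} :
    (G.strongProd H).Adj x y ↔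
      x ≠ y ∧ (G.Adj x.1 y.1 ∨ x.1 = y.1) ∧ (H.Adj x.2 y.2 ∨ x.2 = y.2) := .rfl

def IsWeakHom (G : SimpleGraph V) (H : SimpleGraph W) (φ : V → W) : Prop :=
  ∀ ⦃x y⦄, G.Adj x y → H.Adj (φ x) (φ y) ∨ φ x = φ y

abbrev farPairGraph (G : SimpleGraph V) (d : ℕ) :=
  (G.strongProd G).induce {p | d ≤ G.dist p.1 p.2}

lemma isWeakHom_farPairGraph_fst (G : SimpleGraph V) (d : ℕ) :
    IsWeakHom (G.farPairGraph d) G (fun p => p.1.1) := fun _ _ h => (strongProd_adj.1 h).2.1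

lemma isWeakHom_farPairGraph_snd (G : SimpleGraph V) (d : ℕ) :
    IsWeakHom (G.farPairGraph d) G (fun p => p.1.2) := fun _ _ h => (strongProd_adj.1 h).2.2

lemma two_le_dist_iff {G : SimpleGraph V} {u v : V} (h : G.Reachable u v) :
    2 ≤ G.dist u v ↔ u ≠ v ∧ ¬ G.Adj u v := by
  rw [← dist_eq_one_iff_adj, ← h.dist_eq_zero_iff.ne]
  omega

namespace Walk

lemma exists_getVert_of_mem_darts {G : SimpleGraph V} {u v : V} {p : G.Walk u v} {d : G.Dart}
    (hd : d ∈ p.darts) : ∃ i < p.length, p.getVert i = d.fst ∧ p.getVert (i + 1) = d.snd := by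
  obtain ⟨i, hi, rfl⟩ := List.mem_iff_getElem.1 hd
  rw [darts_getElem_eq_getVert]
  exact ⟨i, p.length_darts ▸ hi, rfl, rfl⟩

end Walk

lemma Reachable.exists_walk_darts_superset {G : SimpleGraph V} {u : V} (ds : List G.Dart)
    (h : ∀ d ∈ ds, G.Reachable u d.fst) : ∃ v, ∃ p : G.Walk u v, ∀ d ∈ ds, d ∈ p.darts := by
  induction ds with
  | nil => exact ⟨u, .nil, by simp⟩
  | cons d ds ih =>
    obtain ⟨v, p, hp⟩ := ih fun d' hd' => h d' (List.mem_cons_of_mem _ hd')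
    obtain ⟨q⟩ := (Reachable.symm ⟨p⟩).trans (h d List.mem_cons_self)
    refine ⟨d.snd, (p.append q).concat d.adj, fun d' hd' => ?_⟩
    rcases List.mem_cons.1 hd' with rfl | hd'
    · simp
    · simp [hp d' hd']

lemma dist_lt_card [Fintype V] (G : SimpleGraph V) (u v : V) : G.dist u v < Fintype.card V := by
  by_cases h : G.Reachable u v
  · obtain ⟨p, hp, hlen⟩ := h.exists_path_of_dist
    exact hlen ▸ hp.length_lt
  · rw [dist_eq_zero_of_not_reachable h]
    exact Fintype.card_pos_iff.2 ⟨u⟩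

end SimpleGraph

section Sweeps

variable {V W : Type*} {G : SimpleGraph V} {l : ℕ}

lemma SweepCond.surjective {f : Fin l → V} (hf : SweepCond G f) (hG : ∀ v, ∃ w, G.Adj v w) :
    Function.Surjective f := by
  intro v
  obtain ⟨w, hvw⟩ := hG v
  obtain ⟨i, hi, he⟩ := hf s(v, w) hvw
  rcases Sym2.eq_iff.1 he with ⟨hv, -⟩ | ⟨hv, -⟩
  · exact ⟨_, hv.symm⟩
  · exact ⟨_, hv.symm⟩

lemma mDist_le_dist {f g : Fin l → V} (i : Fin l) : mDist G f g ≤ G.dist (f i) (g i) :=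
  Nat.sInf_le ⟨i, rfl⟩

lemma le_mDist [NeZero l] {f g : Fin l → V} {d : ℕ} (h : ∀ i, d ≤ G.dist (f i) (g i)) :
    d ≤ mDist G f g :=
  le_csInf ⟨_, 0, rfl⟩ fun _ ⟨i, hi⟩ => hi ▸ h i

lemma mDist_lt_card [Fintype V] (f g : Fin l → V) (hl : 0 < l) : mDist G f g < Fintype.card V :=
  (mDist_le_dist ⟨0, hl⟩).trans_lt (G.dist_lt_card _ _)

lemma mDist_le_strongEdgeSpan [Fintype V] {f g : Fin l → V} (hf : IsLazySweep G f)
    (hg : IsLazySweep G g) : mDist G f g ≤ strongEdgeSpan G := by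
  refine le_csSup ⟨Fintype.card V, ?_⟩ ⟨l, f, g, hf, hg, rfl⟩
  rintro _ ⟨l, f, g, hf, -, rfl⟩
  rcases Nat.eq_zero_or_pos l with rfl | hl
  · simp [mDist]
  · exact (mDist_lt_card f g hl).le

namespace SimpleGraph.Walk

variable {H : SimpleGraph W} {u v : W}

def track (p : H.Walk u v) (π : W → V) : Fin (p.length + 1) → V := fun i => π (p.getVert i)

lemma sweepCond_track (p : H.Walk u v) {π : W → V} (ψ : G →g H) (hψ : ∀ x, π (ψ x) = x)
    (hp : ∀ d : G.Dart, ψ.mapDart d ∈ p.darts) : SweepCond G (p.track π) := by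
  intro e he
  induction e using Sym2.ind with
  | _ x y =>
  obtain ⟨i, hi, hx, hy⟩ := exists_getVert_of_mem_darts (hp ⟨(x, y), he⟩)
  refine ⟨i, by omega, ?_⟩
  simp only [track, hx, hy]
  simp [hψ]

lemma isLazySweep_track (p : H.Walk u v) {π : W → V} (hπ : IsWeakHom H G π) (ψ : G →g H)
    (hψ : ∀ x, π (ψ x) = x) (hp : ∀ d : G.Dart, ψ.mapDart d ∈ p.darts)
    (hG : ∀ v, ∃ w, G.Adj v w) : IsLazySweep G (p.track π) := by
  have hsweep := p.sweepCond_track ψ hψ hp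
  exact ⟨⟨hsweep.surjective hG, fun i hi => hπ (p.adj_getVert_succ (Nat.lt_of_succ_lt_succ hi))⟩,
    hsweep⟩

end SimpleGraph.Walk

end Sweeps

section StrongLowerBound

variable {V : Type*} [Fintype V] {G : SimpleGraph V}

theorem le_strongEdgeSpan_of_isWeakHom (hG : G.Connected) {d : ℕ} {φ : V → V}
    (hφ : IsWeakHom G G φ) (hfar : ∀ x, d ≤ G.dist x (φ x)) {x₀ : V} (hx₀ : φ (φ x₀) = x₀) :
    d ≤ strongEdgeSpan G := by
  rcases Nat.eq_zero_or_pos d with rfl | hd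
  · exact Nat.zero_le _
  have : Nontrivial V := ⟨x₀, φ x₀, fun h => by simpa [← h] using (hfar x₀).trans_lt' hd⟩
  let ι₁ : G →g G.farPairGraph d :=
    ⟨fun x => ⟨(x, φ x), hfar x⟩,
      fun h => ⟨fun e => G.ne_of_adj h (congrArg Prod.fst e), .inl h, hφ h⟩⟩
  let ι₂ : G →g G.farPairGraph d :=
    ⟨fun x => ⟨(φ x, x), show d ≤ G.dist (φ x) x from G.dist_comm ▸ hfar x⟩,
      fun h => ⟨fun e => G.ne_of_adj h (congrArg Prod.snd e), hφ h, .inl h⟩⟩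
  have hreach₂ x : (G.farPairGraph d).Reachable (ι₁ x₀) (ι₂ x) := by
    have : ι₁ x₀ = ι₂ (φ x₀) := Subtype.ext (Prod.ext hx₀.symm rfl)
    exact this ▸ (hG.preconnected (φ x₀) x).map ι₂
  classical
  obtain ⟨v, p, hp⟩ := Reachable.exists_walk_darts_superset (u := ι₁ x₀)
    ((Finset.univ : Finset G.Dart).toList.map ι₁.mapDart ++
      (Finset.univ : Finset G.Dart).toList.map ι₂.mapDart) (by
      simp only [List.mem_append, List.mem_map, Finset.mem_toList, Finset.mem_univ, true_and]
      rintro _ (⟨e, rfl⟩ | ⟨e, rfl⟩)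
      · exact (hG.preconnected x₀ e.fst).map ι₁
      · exact hreach₂ e.fst)
  have hadj := hG.preconnected.exists_adj_of_nontrivial
  have hf := p.isLazySweep_track (isWeakHom_farPairGraph_fst G d) ι₁ (fun _ => rfl)
    (fun e => hp _ (by simp)) hadj
  have hg := p.isLazySweep_track (isWeakHom_farPairGraph_snd G d) ι₂ (fun _ => rfl)
    (fun e => hp _ (by simp)) hadj
  calc d ≤ mDist G (p.track fun q => q.1.1) (p.track fun q => q.1.2) :=
        le_mDist fun i => (p.getVert i).2
    _ ≤ strongEdgeSpan G := mDist_le_strongEdgeSpan hf hg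

end StrongLowerBound

namespace KnPlus

variable {n : ℕ}

def IsEnd (i : Fin n) : Prop := i.val = 0 ∨ i.val = n - 1

instance : DecidablePred (IsEnd (n := n)) := fun _ => inferInstanceAs (Decidable (_ ∨ _))

lemma adj_inl_inl {i j : Fin n} :
    (KnPlus n).Adj (.inl i) (.inl j) ↔ i ≠ j ∧ ¬(IsEnd i ∧ IsEnd j) := by
  simp only [KnPlus, fromRel_adj, IsEnd, ne_eq, Sum.inl.injEq, Fin.ext_iff]
  omega

lemma adj_inl_inr {i : Fin n} {u : Unit} : (KnPlus n).Adj (.inl i) (.inr u) ↔ IsEnd i := by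
  simp [KnPlus, IsEnd]

lemma adj_inr_inl {i : Fin n} {u : Unit} : (KnPlus n).Adj (.inr u) (.inl i) ↔ IsEnd i := by
  rw [adj_comm, adj_inl_inr]

lemma not_adj_inr_inr {u v : Unit} : ¬(KnPlus n).Adj (.inr u) (.inr v) := by
  simp [KnPlus]

lemma connected (n : ℕ) : (KnPlus n).Connected := by
  refine connected_iff_exists_forall_reachable _ |>.2 ⟨.inr (), ?_⟩
  rintro (i | ⟨⟩)
  · by_cases hi : IsEnd i
    · exact (adj_inr_inl.2 hi).reachable
    · have h0 : IsEnd (⟨0, i.pos⟩ : Fin n) := .inl rfl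
      exact (adj_inr_inl.2 h0).reachable.trans
        (adj_inl_inl.2 ⟨fun h => hi (by rwa [← h]), fun h => hi h.2⟩).reachable
  · rfl

lemma two_le_dist_iff {x y : Fin n ⊕ Unit} :
    2 ≤ (KnPlus n).dist x y ↔ x ≠ y ∧ ¬(KnPlus n).Adj x y :=
  SimpleGraph.two_le_dist_iff ((connected n).preconnected x y)

lemma eq_inr_of_two_le_dist {i : Fin n} (hi : ¬IsEnd i) {x : Fin n ⊕ Unit}
    (h : 2 ≤ (KnPlus n).dist (.inl i) x) : x = .inr () := by
  rw [two_le_dist_iff] at h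
  rcases x with j | ⟨⟩
  · exact absurd (adj_inl_inl.2 ⟨fun hij => h.1 (congrArg _ hij), fun h' => hi h'.1⟩) h.2
  · rfl

lemma not_two_le_dist_end_and_inr {i : Fin n} (hi : IsEnd i) (x : Fin n ⊕ Unit) :
    ¬(2 ≤ (KnPlus n).dist (.inl i) x ∧ 2 ≤ (KnPlus n).dist (.inr ()) x) := by
  rintro ⟨hi', hw⟩
  rw [two_le_dist_iff] at hi' hw
  rcases x with j | ⟨⟩
  · have hj : ¬IsEnd j := fun hj => hw.2 (adj_inr_inl.2 hj)
    exact hi'.2 (adj_inl_inl.2 ⟨fun hij => hj (hij ▸ hi), fun h => hj h.2⟩)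
  · exact hw.1 rfl

def partner (c : Fin n) : Fin n ⊕ Unit → Fin n ⊕ Unit
  | .inl i => if IsEnd i then .inl i.rev else .inr ()
  | .inr _ => .inl c

lemma IsEnd.rev {i : Fin n} (hi : IsEnd i) : IsEnd i.rev := by
  unfold IsEnd at *
  rw [Fin.val_rev]
  omega

lemma isWeakHom_partner {c : Fin n} (hc : ¬IsEnd c) :
    IsWeakHom (KnPlus n) (KnPlus n) (partner c) := by
  rintro (i | ⟨⟩) (j | ⟨⟩) h
  · rw [adj_inl_inl] at h
    by_cases hi : IsEnd i <;> by_cases hj : IsEnd j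
    · exact absurd ⟨hi, hj⟩ h.2
    · simp [partner, hi, hj, adj_inl_inr, hi.rev]
    · simp [partner, hi, hj, adj_inr_inl, hj.rev]
    · simp [partner, hi, hj]
  · simp only [partner, adj_inl_inr.1 h, if_true, adj_inl_inl]
    exact .inl ⟨fun h' => hc (h' ▸ (adj_inl_inr.1 h).rev), fun h' => hc h'.2⟩
  · simp only [partner, adj_inr_inl.1 h, if_true, adj_inl_inl]
    exact .inl ⟨fun h' => hc (h' ▸ (adj_inr_inl.1 h).rev), fun h' => hc h'.1⟩
  · exact absurd h not_adj_inr_inr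

lemma two_le_dist_partner (hn : 2 ≤ n) {c : Fin n} (hc : ¬IsEnd c) (x : Fin n ⊕ Unit) :
    2 ≤ (KnPlus n).dist x (partner c x) := by
  rw [two_le_dist_iff]
  rcases x with i | ⟨⟩
  · by_cases hi : IsEnd i
    · simp only [partner, hi, if_true, ne_eq, Sum.inl.injEq, adj_inl_inl, hi.rev, and_true,
        not_true, and_false, not_false_eq_true]
      unfold IsEnd at hi
      rw [Fin.ext_iff, Fin.val_rev]
      omega
    · simp [partner, hi, adj_inl_inr]
  · simp [partner, adj_inr_inl, hc]

lemma two_le_strongEdgeSpan (hn : 3 ≤ n) : 2 ≤ strongEdgeSpan (KnPlus n) := by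
  have hc : ¬IsEnd (⟨1, by omega⟩ : Fin n) := by simp [IsEnd]; omega
  have h0 : IsEnd (⟨0, by omega⟩ : Fin n) := .inl rfl
  refine le_strongEdgeSpan_of_isWeakHom (connected n) (isWeakHom_partner hc)
    (two_le_dist_partner (by omega) hc) (x₀ := .inl ⟨0, by omega⟩) ?_
  simp [partner, h0, h0.rev]

lemma directEdgeSpan_le_one (hn : 4 ≤ n) : directEdgeSpan (KnPlus n) ≤ 1 := by
  refine csSup_le' ?_
  rintro _ ⟨l, f, g, hf, hg, rfl⟩
  by_contra! h
  have hfar i : 2 ≤ (KnPlus n).dist (f i) (g i) := Nat.le_trans h (mDist_le_dist i)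
  have hc₁ : ¬IsEnd (⟨1, by omega⟩ : Fin n) := by simp [IsEnd]; omega
  have hc₂ : ¬IsEnd (⟨2, by omega⟩ : Fin n) := by simp [IsEnd]; omega
  obtain ⟨i, hi, he⟩ := hf.2 s(.inl ⟨1, by omega⟩, .inl ⟨2, by omega⟩)
    (adj_inl_inl.2 ⟨by simp [Fin.ext_iff], fun h => hc₁ h.1⟩)
  have hw j (hj : f j = .inl ⟨1, by omega⟩ ∨ f j = .inl ⟨2, by omega⟩) : g j = .inr () := by
    rcases hj with hj | hj
    · exact eq_inr_of_two_le_dist hc₁ (hj ▸ hfar j)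
    · exact eq_inr_of_two_le_dist hc₂ (hj ▸ hfar j)
  have hstep := hg.1.2 i hi
  rcases Sym2.eq_iff.1 he with ⟨h₁, h₂⟩ | ⟨h₁, h₂⟩
  · rw [hw _ (.inl h₁.symm), hw _ (.inr h₂.symm)] at hstep
    exact not_adj_inr_inr hstep
  · rw [hw _ (.inr h₂.symm), hw _ (.inl h₁.symm)] at hstep
    exact not_adj_inr_inr hstep

lemma cartesianEdgeSpan_le_one (hn : 1 ≤ n) : cartesianEdgeSpan (KnPlus n) ≤ 1 := by
  refine csSup_le' ?_
  rintro _ ⟨l, f, g, hf, -, hopp, rfl⟩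
  by_contra! h
  have hfar i : 2 ≤ (KnPlus n).dist (f i) (g i) := Nat.le_trans h (mDist_le_dist i)
  have ha : IsEnd (⟨0, by omega⟩ : Fin n) := .inl rfl
  have hedge : (KnPlus n).Adj (.inl ⟨0, by omega⟩) (.inr ()) := adj_inl_inr.2 ha
  obtain ⟨i, hi, he⟩ := hf.2 s(.inl ⟨0, by omega⟩, .inr ()) hedge
  have hstay := (hopp i hi).1 (by rw [← mem_edgeSet, ← he]; exact hedge)
  have hfar₀ := hfar ⟨i, by omega⟩
  have hfar₁ := hfar ⟨i + 1, hi⟩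
  rw [← hstay] at hfar₁
  apply not_two_le_dist_end_and_inr ha (g ⟨i, by omega⟩)
  rcases Sym2.eq_iff.1 he with ⟨h₁, h₂⟩ | ⟨h₁, h₂⟩
  · rw [← h₁] at hfar₀
    rw [← h₂] at hfar₁
    exact ⟨hfar₀, hfar₁⟩
  · rw [← h₂] at hfar₀
    rw [← h₁] at hfar₁
    exact ⟨hfar₁, hfar₀⟩

end KnPlus

theorem stmt9 (n : ℕ) (hn : 4 ≤ n) :
    strongEdgeSpan (KnPlus n) > max (directEdgeSpan (KnPlus n)) (cartesianEdgeSpan (KnPlus n)) := by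
  have hdirect := KnPlus.directEdgeSpan_le_one hn
  have hcartesian := KnPlus.cartesianEdgeSpan_le_one (n := n) (by omega)
  have hstrong := KnPlus.two_le_strongEdgeSpan (n := n) (by omega)
  omega
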